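/- arXiv:1908.07793 — 4 statements merged into one kernel-verified Lean document; each statement's English description precedes it below -/
import Mathlib

section
/- Let Ψ : [0,b] → ℝ be C¹, increasing with Ψ' ≠ 0, and let α > 0. Then for each t ∈ (0,b], (1/Γ(α)) ∫₀ᵗ Ψ'(s)(Ψ(t) − Ψ(s))^{α−1} E_α((Ψ(s) − Ψ(0))^α) ds ≤ E_α((Ψ(t) − Ψ(0))^α), where E_α(z) = Σ_{n≥0} z^n/Γ(nα+1) is the Mittag–Leffler function. More precisely, the left-hand side equals Σ_{n≥1} (Ψ(t) − Ψ(0))^{nα}/Γ(nα+1). -/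
open Set intervalIntegral

section Helpers
open MeasureTheory


lemma complex_beta_eq {p q x : ℝ} (hx0 : 0 ≤ x) (hx1 : 0 ≤ 1 - x) :
    (x:ℂ) ^ ((p:ℂ)-1) * (1-(x:ℂ)) ^ ((q:ℂ)-1) = ((x ^ (p-1) * (1-x) ^ (q-1) : ℝ) : ℂ) := by
  rw [Complex.ofReal_mul, Complex.ofReal_cpow hx0, Complex.ofReal_cpow hx1]
  push_cast
  ring_nf

lemma realBeta_intervalIntegrable {p q : ℝ} (hp : 0 < p) (hq : 0 < q) :
    IntervalIntegrable (fun x : ℝ => x ^ (p-1) * (1-x) ^ (q-1)) volume 0 1 := by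
  have h := Complex.betaIntegral_convergent (u := (p:ℂ)) (v := (q:ℂ)) (by simpa) (by simpa)
  rw [intervalIntegrable_iff_integrableOn_Ioc_of_le zero_le_one] at h ⊢
  have h2 : IntegrableOn (fun x : ℝ => ((x:ℂ) ^ ((p:ℂ)-1) * (1-(x:ℂ)) ^ ((q:ℂ)-1)).re)
      (Ioc (0:ℝ) 1) volume := h.re
  refine h2.congr_fun (fun x hx => ?_) measurableSet_Ioc
  dsimp only
  rw [complex_beta_eq hx.1.le (by linarith [hx.2]), Complex.ofReal_re]

lemma realBeta_integral {p q : ℝ} (hp : 0 < p) (hq : 0 < q) :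
    ∫ x in (0:ℝ)..1, x ^ (p-1) * (1-x) ^ (q-1)
      = Real.Gamma p * Real.Gamma q / Real.Gamma (p+q) := by
  have h := Complex.Gamma_mul_Gamma_eq_betaIntegral (s := (p:ℂ)) (t := (q:ℂ)) (by simpa) (by simpa)
  have hβ : Complex.betaIntegral p q = ((∫ x in (0:ℝ)..1, x ^ (p-1) * (1-x) ^ (q-1) : ℝ) : ℂ) := by
    rw [Complex.betaIntegral, ← intervalIntegral.integral_ofReal]
    refine intervalIntegral.integral_congr (fun x hx => ?_)
    rw [uIcc_of_le zero_le_one] at hx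
    exact complex_beta_eq hx.1 (by linarith [hx.2])
  rw [hβ, ← Complex.ofReal_add, Complex.Gamma_ofReal, Complex.Gamma_ofReal,
    Complex.Gamma_ofReal, ← Complex.ofReal_mul, ← Complex.ofReal_mul] at h
  have := Complex.ofReal_inj.mp h
  have hG : Real.Gamma (p+q) ≠ 0 := (Real.Gamma_pos_of_pos (by linarith)).ne'
  field_simp [this]
  linear_combination this.symm

lemma realBeta_scaled_eqOn {p q T : ℝ} (hT : 0 < T) {v : ℝ} (hv0 : 0 ≤ v) (hvT : v ≤ T) :
    v ^ (p-1) * (T-v) ^ (q-1)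
      = T ^ (p-1) * T ^ (q-1) * ((v/T) ^ (p-1) * (1-v/T) ^ (q-1)) := by
  have h1 : (1 : ℝ) - v/T = (T-v)/T := by field_simp
  rw [h1, Real.div_rpow hv0 hT.le, Real.div_rpow (by linarith) hT.le]
  have e1 : T ^ (p-1) ≠ 0 := (Real.rpow_pos_of_pos hT _).ne'
  have e2 : T ^ (q-1) ≠ 0 := (Real.rpow_pos_of_pos hT _).ne'
  field_simp

lemma realBeta_scaled_intervalIntegrable {p q T : ℝ} (hp : 0 < p) (hq : 0 < q) (hT : 0 < T) :
    IntervalIntegrable (fun v : ℝ => v ^ (p-1) * (T-v) ^ (q-1)) volume 0 T := by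
  have h0 := (realBeta_intervalIntegrable hp hq).comp_mul_right (c := T⁻¹)
  simp only [div_inv_eq_mul, zero_mul, one_mul] at h0
  have h1 : IntervalIntegrable
      (fun v : ℝ => T ^ (p-1) * T ^ (q-1) * ((v * T⁻¹) ^ (p-1) * (1 - v * T⁻¹) ^ (q-1)))
      volume 0 T := h0.const_mul _
  rw [intervalIntegrable_iff_integrableOn_Ioc_of_le hT.le] at h1 ⊢
  refine h1.congr_fun (fun v hv => ?_) measurableSet_Ioc
  rw [realBeta_scaled_eqOn hT hv.1.le hv.2, div_eq_mul_inv]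

lemma realBeta_scaled_integral {p q T : ℝ} (hp : 0 < p) (hq : 0 < q) (hT : 0 < T) :
    ∫ v in (0:ℝ)..T, v ^ (p-1) * (T-v) ^ (q-1)
      = T ^ (p+q-1) * (Real.Gamma p * Real.Gamma q / Real.Gamma (p+q)) := by
  have hcongr : ∫ v in (0:ℝ)..T, v ^ (p-1) * (T-v) ^ (q-1)
      = ∫ v in (0:ℝ)..T, T ^ (p-1) * T ^ (q-1) * ((v/T) ^ (p-1) * (1-v/T) ^ (q-1)) := by
    refine intervalIntegral.integral_congr (fun v hv => ?_)
    rw [uIcc_of_le hT.le] at hv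
    exact realBeta_scaled_eqOn hT hv.1 hv.2
  rw [hcongr, intervalIntegral.integral_const_mul,
    intervalIntegral.integral_comp_div (c := T) (f := fun x => x ^ (p-1) * (1-x) ^ (q-1)) hT.ne',
    zero_div, div_self hT.ne', realBeta_integral hp hq]
  rw [smul_eq_mul]
  rw [show T ^ (p+q-1) = T ^ (p-1) * T ^ (q-1) * T by
    rw [show p+q-1 = (p-1)+((q-1)+1) by ring, Real.rpow_add hT, Real.rpow_add hT, Real.rpow_one, mul_assoc]]
  ring

lemma gamma_ratio {x α : ℝ} (hα : 0 < α) (hx : 1 < x) :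
    Real.Gamma x * (x-1) ^ α ≤ Real.Gamma (x+α) := by
  have h0 : (0:ℝ) < x - 1 := by linarith
  have hs := Real.convexOn_log_Gamma.slope_mono_adjacent
    (x := x - 1) (y := x) (z := x + α)
    (by simpa using h0) (by simp; linarith) (by linarith) (by linarith)
  have hΓ : Real.Gamma x = (x-1) * Real.Gamma (x-1) := by
    have := Real.Gamma_add_one h0.ne'
    rw [sub_add_cancel] at this
    exact this
  have hG1 : 0 < Real.Gamma (x-1) := Real.Gamma_pos_of_pos h0
  have hGx : 0 < Real.Gamma x := Real.Gamma_pos_of_pos (by linarith)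
  have hGxa : 0 < Real.Gamma (x+α) := Real.Gamma_pos_of_pos (by linarith)
  simp only [Function.comp] at hs
  have hlog : Real.log (Real.Gamma x) - Real.log (Real.Gamma (x-1)) = Real.log (x-1) := by
    rw [hΓ, Real.log_mul h0.ne' hG1.ne']; ring
  rw [div_le_div_iff₀ (by linarith) (by linarith)] at hs
  have key : Real.log (Real.Gamma x) + α * Real.log (x-1) ≤ Real.log (Real.Gamma (x+α)) := by
    have h1 : x - (x-1) = 1 := by ring
    have h2 : x + α - x = α := by ring
    rw [h1, h2] at hs
    nlinarith [hs, hlog]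
  calc Real.Gamma x * (x-1) ^ α
      = Real.exp (Real.log (Real.Gamma x) + α * Real.log (x-1)) := by
        rw [Real.exp_add, Real.exp_log hGx, Real.rpow_def_of_pos h0, mul_comm α]
    _ ≤ Real.exp (Real.log (Real.Gamma (x+α))) := Real.exp_le_exp.mpr key
    _ = Real.Gamma (x+α) := Real.exp_log hGxa

lemma summable_ml {α : ℝ} (hα : 0 < α) {z : ℝ} (hz : 0 ≤ z) :
    Summable (fun n : ℕ => z ^ n / Real.Gamma ((n:ℝ) * α + 1)) := by
  have htend : Filter.Tendsto (fun n : ℕ => ((n:ℝ)*α) ^ α) Filter.atTop Filter.atTop :=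
    (tendsto_rpow_atTop hα).comp
      (Filter.Tendsto.atTop_mul_const hα tendsto_natCast_atTop_atTop)
  refine summable_of_ratio_norm_eventually_le (r := 1/2) (by norm_num) ?_
  filter_upwards [htend.eventually_ge_atTop (2*z), Filter.eventually_ge_atTop 1] with n h2 h1
  have hn1 : (1:ℝ) ≤ (n:ℝ) := by exact_mod_cast h1
  have hx : (1:ℝ) < (n:ℝ)*α + 1 := by nlinarith
  have hg := gamma_ratio hα hx
  have hsub : (n:ℝ)*α + 1 - 1 = (n:ℝ)*α := by ring
  rw [hsub] at hg
  have heq : ((n:ℝ)+1)*α + 1 = ((n:ℝ)*α + 1) + α := by ring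
  have hG1 : 0 < Real.Gamma ((n:ℝ)*α+1) := Real.Gamma_pos_of_pos (by linarith)
  have hG2 : 0 < Real.Gamma (((n:ℝ)+1)*α+1) := Real.Gamma_pos_of_pos (by positivity)
  have hP : 0 < ((n:ℝ)*α) ^ α := Real.rpow_pos_of_pos (by nlinarith) _
  rw [Real.norm_eq_abs, Real.norm_eq_abs, abs_of_nonneg (by positivity),
    abs_of_nonneg (by positivity)]
  push_cast
  rw [heq]
  calc z ^ (n+1) / Real.Gamma (((n:ℝ)*α+1)+α)
      ≤ z ^ (n+1) / (Real.Gamma ((n:ℝ)*α+1) * ((n:ℝ)*α) ^ α) := by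
        gcongr
    _ = (z / ((n:ℝ)*α) ^ α) * (z ^ n / Real.Gamma ((n:ℝ)*α+1)) := by
        rw [pow_succ]; field_simp
    _ ≤ (1/2) * (z ^ n / Real.Gamma ((n:ℝ)*α+1)) := by
        refine mul_le_mul_of_nonneg_right ?_ (by positivity)
        rw [div_le_iff₀ hP]; linarith

lemma deriv_nonneg_of_strictMonoOn {Ψ : ℝ → ℝ} {d b x : ℝ} (hb : d < b)
    (hmono : StrictMonoOn Ψ (Set.Icc d b)) {x' : ℝ}
    (hx : x ∈ Set.Ico d b) (hd : HasDerivAt Ψ x' x) : 0 ≤ x' := by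
  have h2 : Filter.Tendsto (slope Ψ x) (nhdsWithin x (Set.Ioi x)) (nhds x') :=
    (hasDerivAt_iff_tendsto_slope.mp hd).mono_left
      (nhdsWithin_mono x (fun y hy => ne_of_gt hy))
  refine ge_of_tendsto h2 ?_
  filter_upwards [Ioo_mem_nhdsGT_of_mem ⟨le_refl x, hx.2⟩] with y hy
  have hxy : Ψ x < Ψ y := hmono ⟨hx.1, hx.2.le⟩ ⟨hx.1.trans hy.1.le, hy.2.le⟩ hy.1
  rw [slope_def_field]
  have h3 : 0 < y - x := by linarith [hy.1]
  exact (div_pos (by linarith) h3).le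

lemma term_integrableOn {α T c : ℝ} (hα : 0 < α) (hT : 0 < T) (n : ℕ) :
    IntegrableOn (fun u : ℝ => (u-c) ^ ((n:ℝ)*α) * (c+T-u) ^ (α-1)) (Ioo c (c+T)) volume := by
  have h0 := realBeta_scaled_intervalIntegrable (p := (n:ℝ)*α+1) (q := α)
    (by positivity) hα hT
  simp only [add_sub_cancel_right] at h0
  have h1 := h0.comp_sub_right c
  simp only [zero_add] at h1
  rw [show T + c = c + T by ring] at h1
  rw [intervalIntegrable_iff_integrableOn_Ioo_of_le (by linarith)] at h1
  refine h1.congr_fun (fun u hu => ?_) measurableSet_Ioo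
  dsimp only
  rw [show T - (u - c) = c + T - u by ring]

lemma term_integral {α T c : ℝ} (hα : 0 < α) (hT : 0 < T) (n : ℕ) :
    ∫ u in Ioo c (c+T), (u-c) ^ ((n:ℝ)*α) * (c+T-u) ^ (α-1)
      = T ^ (((n:ℝ)+1)*α) *
        (Real.Gamma ((n:ℝ)*α+1) * Real.Gamma α / Real.Gamma (((n:ℝ)+1)*α+1)) := by
  rw [← integral_Ioc_eq_integral_Ioo,
    ← intervalIntegral.integral_of_le (by linarith : c ≤ c + T)]
  have h1 : (∫ u in c..(c+T), (u-c) ^ ((n:ℝ)*α) * (c+T-u) ^ (α-1))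
      = ∫ v in (c-c)..(c+T-c), v ^ ((n:ℝ)*α) * (T-v) ^ (α-1) := by
    rw [← intervalIntegral.integral_comp_sub_right
      (fun v => v ^ ((n:ℝ)*α) * (T-v) ^ (α-1)) c]
    refine intervalIntegral.integral_congr (fun u _ => ?_)
    rw [show T - (u - c) = c + T - u by ring]
  rw [h1, sub_self, add_sub_cancel_left]
  have h2 := realBeta_scaled_integral (p := (n:ℝ)*α+1) (q := α) (by positivity) hα hT
  simp only [add_sub_cancel_right] at h2
  rw [h2, show (n:ℝ)*α+1+α-1 = ((n:ℝ)+1)*α by ring, show (n:ℝ)*α+1+α = ((n:ℝ)+1)*α+1 by ring]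

lemma rpow_mul_natCast {x : ℝ} (hx : 0 ≤ x) (α : ℝ) (n : ℕ) :
    (x ^ α) ^ n = x ^ ((n:ℝ) * α) := by
  rw [← Real.rpow_natCast (x ^ α) n, ← Real.rpow_mul hx, mul_comm]

end Helpers

/-- The one-parameter Mittag–Leffler function `E_α(z) = Σ zⁿ/Γ(nα+1)`. -/
noncomputable def mittagLeffler (α z : ℝ) : ℝ :=
  ∑' n : ℕ, z ^ n / Real.Gamma (n * α + 1)

/-- the Ψ-fractional integral of `E_α((Ψ(s)−Ψ(0))^α)` is bounded by
`E_α((Ψ(t)−Ψ(0))^α)`; more precisely it equals `Σ_{n≥1} (Ψ(t)−Ψ(0))^{nα}/Γ(nα+1)`. -/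
theorem psi_fracInt_mittagLeffler
    (b : ℝ) (hb : 0 < b) (Ψ Ψ' : ℝ → ℝ)
    (hderiv : ∀ x ∈ Set.Icc (0:ℝ) b, HasDerivAt Ψ (Ψ' x) x)
    (hΨ'cont : ContinuousOn Ψ' (Set.Icc (0:ℝ) b))
    (hmono : StrictMonoOn Ψ (Set.Icc (0:ℝ) b))
    (hΨ'ne : ∀ x ∈ Set.Icc (0:ℝ) b, Ψ' x ≠ 0)
    (α : ℝ) (hα : 0 < α) :
    ∀ t ∈ Set.Ioc (0:ℝ) b,
      ((1 / Real.Gamma α) *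
          ∫ s in (0:ℝ)..t,
            Ψ' s * (Ψ t - Ψ s) ^ (α - 1) * mittagLeffler α ((Ψ s - Ψ 0) ^ α))
        = (∑' n : ℕ, (Ψ t - Ψ 0) ^ (((n : ℝ) + 1) * α) /
            Real.Gamma (((n : ℝ) + 1) * α + 1)) ∧
      ((1 / Real.Gamma α) *
          ∫ s in (0:ℝ)..t,
            Ψ' s * (Ψ t - Ψ s) ^ (α - 1) * mittagLeffler α ((Ψ s - Ψ 0) ^ α))
        ≤ mittagLeffler α ((Ψ t - Ψ 0) ^ α) := by
  open MeasureTheory in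
  rintro t ⟨ht0, htb⟩
  have h0b : (0:ℝ) ∈ Set.Icc (0:ℝ) b := ⟨le_refl 0, hb.le⟩
  have htIcc : t ∈ Set.Icc (0:ℝ) b := ⟨ht0.le, htb⟩
  set c := Ψ 0 with hc
  set T := Ψ t - c with hTdef
  have hT : 0 < T := sub_pos.mpr (hmono h0b htIcc ht0)
  have hΨt : Ψ t = c + T := by rw [hTdef]; ring
  have hGα : (0:ℝ) < Real.Gamma α := Real.Gamma_pos_of_pos hα
  have hsub : Set.Icc (0:ℝ) t ⊆ Set.Icc (0:ℝ) b := Set.Icc_subset_Icc le_rfl htb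
  have hcont : ContinuousOn Ψ (Set.Icc (0:ℝ) b) :=
    fun x hx => (hderiv x hx).continuousAt.continuousWithinAt
  set F : ℝ → ℝ := fun u => (Ψ t - u) ^ (α - 1) * mittagLeffler α ((u - c) ^ α) with hF
  -- change of variables
  have himg : Ψ '' Set.Ioo 0 t = Set.Ioo c (Ψ t) := by
    apply Set.Subset.antisymm
    · rintro y ⟨s, hs, rfl⟩
      have hsI : s ∈ Set.Icc (0:ℝ) b := hsub ⟨hs.1.le, hs.2.le⟩
      exact ⟨hmono h0b hsI hs.1, hmono hsI htIcc hs.2⟩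
    · exact intermediate_value_Ioo ht0.le (hcont.mono hsub)
  have hchg : ∫ u in Set.Ioo c (Ψ t), F u = ∫ s in Set.Ioo 0 t, |Ψ' s| • F (Ψ s) := by
    rw [← himg]
    exact integral_image_eq_integral_abs_deriv_smul measurableSet_Ioo
      (fun x hx => (hderiv x (hsub (Set.Ioo_subset_Icc_self hx))).hasDerivWithinAt)
      (hmono.injOn.mono (fun x hx => hsub (Set.Ioo_subset_Icc_self hx))) F
  have hI : (∫ s in (0:ℝ)..t, Ψ' s * (Ψ t - Ψ s) ^ (α - 1) * mittagLeffler α ((Ψ s - c) ^ α))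
      = ∫ u in Set.Ioo c (Ψ t), F u := by
    rw [intervalIntegral.integral_of_le ht0.le, MeasureTheory.integral_Ioc_eq_integral_Ioo, hchg]
    refine (setIntegral_congr_fun measurableSet_Ioo (fun s hs => ?_))
    have hΨ'nn : 0 ≤ Ψ' s :=
      deriv_nonneg_of_strictMonoOn hb hmono ⟨hs.1.le, lt_of_lt_of_le hs.2 htb⟩
        (hderiv s (hsub (Set.Ioo_subset_Icc_self hs)))
    rw [abs_of_nonneg hΨ'nn, smul_eq_mul, hF]
    ring
  -- series of term functions
  set f : ℕ → ℝ → ℝ := fun n u =>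
    ((u - c) ^ ((n:ℝ) * α) * (c + T - u) ^ (α - 1)) / Real.Gamma ((n:ℝ) * α + 1) with hfdef
  have hF_eq : ∀ u ∈ Set.Ioo c (Ψ t), F u = ∑' n, f n u := by
    intro u hu
    have hu0 : (0:ℝ) ≤ u - c := by linarith [hu.1]
    rw [hF]
    simp only [mittagLeffler, ← tsum_mul_left]
    refine tsum_congr (fun n => ?_)
    rw [hfdef]
    simp only []
    rw [rpow_mul_natCast hu0 α n, ← hΨt]
    push_cast
    ring
  -- per-term integrability and values
  have hint : ∀ n, IntegrableOn (f n) (Set.Ioo c (Ψ t)) volume := by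
    intro n
    rw [hΨt]
    exact (term_integrableOn hα hT n).div_const _
  set V : ℕ → ℝ := fun n => T ^ (((n:ℝ) + 1) * α) * Real.Gamma α /
    Real.Gamma (((n:ℝ) + 1) * α + 1) with hV
  have hval : ∀ n, ∫ u in Set.Ioo c (Ψ t), f n u = V n := by
    intro n
    rw [hΨt]
    have hGn : Real.Gamma ((n:ℝ) * α + 1) ≠ 0 :=
      (Real.Gamma_pos_of_pos (by positivity)).ne'
    rw [hfdef]
    simp only []
    rw [MeasureTheory.integral_div, term_integral hα hT n, hV]
    field_simp
  have hnonneg : ∀ n, ∀ u ∈ Set.Ioo c (Ψ t), 0 ≤ f n u := by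
    intro n u hu
    have hu0 : (0:ℝ) ≤ u - c := by linarith [hu.1]
    have hu1 : (0:ℝ) ≤ c + T - u := by rw [← hΨt]; linarith [hu.2]
    have := (Real.Gamma_pos_of_pos (show (0:ℝ) < (n:ℝ) * α + 1 by positivity)).le
    rw [hfdef]
    positivity
  -- summability of the values
  have hz : (0:ℝ) ≤ T ^ α := Real.rpow_nonneg hT.le α
  have hsum_a : Summable (fun n : ℕ => (T ^ α) ^ n / Real.Gamma ((n:ℝ) * α + 1)) :=
    summable_ml hα hz
  have hVa : ∀ n : ℕ, V n = Real.Gamma α *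
      ((T ^ α) ^ (n+1) / Real.Gamma (((n+1:ℕ):ℝ) * α + 1)) := by
    intro n
    rw [hV]
    simp only []
    rw [rpow_mul_natCast hT.le α (n+1)]
    push_cast
    ring
  have hVsum : Summable V := by
    refine Summable.congr ?_ (fun n => (hVa n).symm)
    exact ((summable_nat_add_iff 1).mpr hsum_a).mul_left _
  have hVnn : ∀ n, 0 ≤ V n := by
    intro n
    have := (Real.Gamma_pos_of_pos (show (0:ℝ) < ((n:ℝ)+1) * α + 1 by positivity)).le
    rw [hV]
    positivity
  -- swap integral and sum
  have hmeas : ∀ n, AEStronglyMeasurable (f n) (volume.restrict (Set.Ioo c (Ψ t))) := by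
    intro n
    have : Measurable (f n) := by rw [hfdef]; fun_prop
    exact this.aestronglyMeasurable
  have hlint : ∀ n, ∫⁻ u in Set.Ioo c (Ψ t), ‖f n u‖ₑ = ENNReal.ofReal (V n) := by
    intro n
    rw [← MeasureTheory.ofReal_integral_norm_eq_lintegral_enorm (hint n)]
    congr 1
    rw [← hval n]
    exact setIntegral_congr_fun measurableSet_Ioo
      (fun u hu => Real.norm_of_nonneg (hnonneg n u hu))
  have hswap : ∫ u in Set.Ioo c (Ψ t), (∑' n, f n u) = ∑' n, ∫ u in Set.Ioo c (Ψ t), f n u := by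
    refine MeasureTheory.integral_tsum hmeas ?_
    rw [funext hlint, ← ENNReal.ofReal_tsum_of_nonneg hVnn hVsum]
    exact ENNReal.ofReal_ne_top
  -- main equality
  have heq : ((1 / Real.Gamma α) *
      ∫ s in (0:ℝ)..t, Ψ' s * (Ψ t - Ψ s) ^ (α - 1) * mittagLeffler α ((Ψ s - c) ^ α))
      = ∑' n : ℕ, T ^ (((n : ℝ) + 1) * α) / Real.Gamma (((n : ℝ) + 1) * α + 1) := by
    rw [hI, setIntegral_congr_fun measurableSet_Ioo hF_eq, hswap]
    rw [funext hval] -- now : (1/Γα) * ∑' V n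
    rw [← tsum_mul_left]
    refine tsum_congr (fun n => ?_)
    field_simp
  refine ⟨heq, ?_⟩
  rw [heq]
  -- inequality
  have hML : mittagLeffler α (T ^ α)
      = 1 + ∑' n : ℕ, T ^ (((n : ℝ) + 1) * α) / Real.Gamma (((n : ℝ) + 1) * α + 1) := by
    rw [mittagLeffler, Summable.tsum_eq_zero_add hsum_a]
    congr 1
    · norm_num [Real.Gamma_one]
    · refine tsum_congr (fun n => ?_)
      rw [rpow_mul_natCast hT.le α (n+1)]
      push_cast
      ring_nf
  rw [hML]
  have : (0:ℝ) ≤ ∑' n : ℕ, T ^ (((n : ℝ) + 1) * α) / Real.Gamma (((n : ℝ) + 1) * α + 1) := by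
    refine tsum_nonneg (fun n => ?_)
    have := (Real.Gamma_pos_of_pos (show (0:ℝ) < ((n:ℝ)+1) * α + 1 by positivity)).le
    positivity
  linarith
end

section
/- Let (X, d, ≤) be an ordered metric space and T : X → X an increasing Picard operator whose unique fixed point is x*. Then for any x ∈ X with x ≤ T(x), one has x ≤ x*. (Abstract Gronwall lemma.) -/
open Filter

theorem abstract_gronwall_general
    (X : Type*) [MetricSpace X] [PartialOrder X] [OrderClosedTopology X]
    (T : X → X) (hmono : Monotone T)
    (xstar : X)
    (hconv : ∀ x₀ : X, Tendsto (fun n => T^[n] x₀) atTop (nhds xstar)) :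
    ∀ x : X, x ≤ T x → x ≤ xstar :=
  fun x hx => (hmono.monotone_iterate_of_le_map hx).ge_of_tendsto (hconv x) 0

/-- abstract Gronwall lemma: if `T` is an increasing Picard
operator on an ordered metric space with unique fixed point `x*`, then
`x ≤ T x` implies `x ≤ x*`. -/
theorem abstract_gronwall
    (X : Type*) [MetricSpace X] [PartialOrder X] [OrderClosedTopology X]
    (T : X → X) (hmono : Monotone T)
    (xstar : X) (hfix : T xstar = xstar)
    (huniq : ∀ y : X, T y = y → y = xstar)
    (hconv : ∀ x₀ : X, Tendsto (fun n => T^[n] x₀) atTop (nhds xstar)) :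
    ∀ x : X, x ≤ T x → x ≤ xstar :=
  abstract_gronwall_general X T hmono xstar hconv
end

section
/- Define the operator Q on C([−r,b], ℝ≥0) by (Qz)(t) = 0 for t ∈ [−r,0] and, for t ∈ (0,b], (Qz)(t) = A + (1/Γ(ρ)) Σ_{0<t_k<t} L_k z(t_k) + C ∫₀ᵗ Ψ'(s)(Ψ(t) − Ψ(s))^{α−1}(z(s) + z(h(s))) ds, where A ≥ 0, C = K(Ψ(b) − Ψ(0))^{1−ρ}/((1 − L_f)Γ(α)). If (Σ_{k=1}^p L_k)/Γ(ρ) + 2K(Ψ(b) − Ψ(0))^{1−ρ+α}/((1 − L_f)Γ(α+1)) < 1, then Q is a contraction in the supremum norm, with Lipschitz constant equal to that quantity. -/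
open Set intervalIntegral Finset

/-- the operator `Q` is a contraction in the supremum norm with
Lipschitz constant `(Σ L_k)/Γ(ρ) + 2K(Ψ(b)−Ψ(0))^{1−ρ+α}/((1−L_f)Γ(α+1))`. -/
theorem Q_operator_contraction
    (r b α ρ K Lf A : ℝ) (hr : 0 < r) (hb : 0 < b)
    (hα0 : 0 < α) (hα1 : α < 1) (hρ0 : 0 < ρ) (hρ1 : ρ ≤ 1)
    (hK : 0 < K) (hLf0 : 0 < Lf) (hLf1 : Lf < 1) (hA : 0 ≤ A)
    (p : ℕ) (tk : ℕ → ℝ) (LJ : ℕ → ℝ)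
    (htk0 : 0 < tk 1) (htkb : tk p < b)
    (htkmono : ∀ k, 1 ≤ k → k < p → tk k < tk (k + 1))
    (hLJ : ∀ k ∈ Finset.Icc 1 p, 0 < LJ k)
    (Ψ Ψ' h : ℝ → ℝ)
    (hderiv : ∀ x ∈ Set.Icc (0:ℝ) b, HasDerivAt Ψ (Ψ' x) x)
    (hΨ'cont : ContinuousOn Ψ' (Set.Icc (0:ℝ) b))
    (hmono : StrictMonoOn Ψ (Set.Icc (0:ℝ) b))
    (hΨ'ne : ∀ x ∈ Set.Icc (0:ℝ) b, Ψ' x ≠ 0)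
    (hhc : ContinuousOn h (Set.Ioc 0 b))
    (hmaps : ∀ t ∈ Set.Ioc (0:ℝ) b, h t ∈ Set.Icc (-r) b)
    (hht : ∀ t ∈ Set.Ioc (0:ℝ) b, h t ≤ t)
    -- the operator Q
    (Q : (ℝ → ℝ) → ℝ → ℝ)
    (hQ : ∀ z : ℝ → ℝ, ∀ t : ℝ,
      Q z t = if t ≤ 0 then 0 else
        A + (1 / Real.Gamma ρ) *
              (∑ k ∈ Finset.Icc 1 p, if tk k < t then LJ k * z (tk k) else 0)
          + (K * (Ψ b - Ψ 0) ^ (1 - ρ) / ((1 - Lf) * Real.Gamma α)) *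
              ∫ s in (0:ℝ)..t, Ψ' s * (Ψ t - Ψ s) ^ (α - 1) * (z s + z (h s)))
    -- smallness condition
    (hsmall : (∑ k ∈ Finset.Icc 1 p, LJ k) / Real.Gamma ρ
        + 2 * K * (Ψ b - Ψ 0) ^ (1 - ρ + α) / ((1 - Lf) * Real.Gamma (α + 1)) < 1) :
    ∀ z z' : ℝ → ℝ,
      ContinuousOn z (Set.Icc (-r) b) → (∀ s ∈ Set.Icc (-r) b, 0 ≤ z s) →
      ContinuousOn z' (Set.Icc (-r) b) → (∀ s ∈ Set.Icc (-r) b, 0 ≤ z' s) →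
      ∀ M : ℝ, 0 ≤ M → (∀ s ∈ Set.Icc (-r) b, |z s - z' s| ≤ M) →
        ∀ t ∈ Set.Icc (-r) b,
          |Q z t - Q z' t| ≤
            ((∑ k ∈ Finset.Icc 1 p, LJ k) / Real.Gamma ρ
              + 2 * K * (Ψ b - Ψ 0) ^ (1 - ρ + α) / ((1 - Lf) * Real.Gamma (α + 1))) * M := by
  have hΓρ : 0 < Real.Gamma ρ := Real.Gamma_pos_of_pos hρ0
  have hΓα : 0 < Real.Gamma α := Real.Gamma_pos_of_pos hα0
  have hΓα1 : 0 < Real.Gamma (α + 1) := Real.Gamma_pos_of_pos (by linarith)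
  have hLf' : 0 < 1 - Lf := by linarith
  have h0mem : (0:ℝ) ∈ Set.Icc (0:ℝ) b := ⟨le_rfl, hb.le⟩
  have hbmem : b ∈ Set.Icc (0:ℝ) b := ⟨hb.le, le_rfl⟩
  have hΨ0b : Ψ 0 < Ψ b := hmono h0mem hbmem hb
  have hΨcont : ContinuousOn Ψ (Set.Icc (0:ℝ) b) := fun x hx =>
    (hderiv x hx).continuousAt.continuousWithinAt
  set C : ℝ := K * (Ψ b - Ψ 0) ^ (1 - ρ) / ((1 - Lf) * Real.Gamma α) with hCdef
  have hC0 : 0 ≤ C := by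
    apply div_nonneg (mul_nonneg hK.le (Real.rpow_nonneg (by linarith) _))
    positivity
  have hS0 : 0 ≤ ∑ k ∈ Finset.Icc 1 p, LJ k :=
    Finset.sum_nonneg fun k hk => (hLJ k hk).le
  have hRHS0 : 0 ≤ (∑ k ∈ Finset.Icc 1 p, LJ k) / Real.Gamma ρ
      + 2 * K * (Ψ b - Ψ 0) ^ (1 - ρ + α) / ((1 - Lf) * Real.Gamma (α + 1)) := by
    apply add_nonneg (div_nonneg hS0 hΓρ.le)
    apply div_nonneg
    · exact mul_nonneg (by positivity) (Real.rpow_nonneg (by linarith) _)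
    · positivity
  -- Ψ' is positive on [0, b]
  have hΨ'pos : ∀ x ∈ Set.Icc (0:ℝ) b, 0 < Ψ' x := by
    obtain ⟨c0, hc0, hc0eq⟩ := exists_hasDerivAt_eq_slope Ψ Ψ' hb hΨcont
      (fun x hx => hderiv x (Set.mem_Icc_of_Ioo hx))
    have hc0mem : c0 ∈ Set.Icc (0:ℝ) b := Set.mem_Icc_of_Ioo hc0
    have hc0pos : 0 < Ψ' c0 := by
      rw [hc0eq]
      apply div_pos (by linarith) (by linarith)
    intro x hx
    rcases (hΨ'ne x hx).lt_or_gt with hneg | hpos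
    · exfalso
      have hsub : Set.uIcc x c0 ⊆ Set.Icc (0:ℝ) b := Set.uIcc_subset_Icc hx hc0mem
      have h0m : (0:ℝ) ∈ Set.uIcc (Ψ' x) (Ψ' c0) :=
        Set.mem_uIcc.2 (Or.inl ⟨hneg.le, hc0pos.le⟩)
      obtain ⟨y, hy, hy0⟩ := intermediate_value_uIcc (hΨ'cont.mono hsub) h0m
      exact hΨ'ne y (hsub hy) hy0
    · exact hpos
  -- impulse times live in [-r, b]
  have htkmem : ∀ k ∈ Finset.Icc 1 p, tk k ∈ Set.Icc (-r) b := by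
    have hle : ∀ j, 1 ≤ j → ∀ k, j ≤ k → k ≤ p → tk j ≤ tk k := by
      intro j hj k hjk
      induction k, hjk using Nat.le_induction with
      | base => intro _; exact le_rfl
      | succ n hn ih =>
        intro hnp
        exact (ih (by omega)).trans (htkmono n (by omega) (by omega)).le
    intro k hk
    simp only [Finset.mem_Icc] at hk
    constructor
    · have : 0 < tk k := lt_of_lt_of_le htk0 (hle 1 le_rfl k hk.1 hk.2)
      linarith
    · exact (hle k hk.1 p hk.2 le_rfl).trans htkb.le
  -- the key integral computation
  have key : ∀ t : ℝ, 0 < t → t ≤ b →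
      IntervalIntegrable (fun s => Ψ' s * (Ψ t - Ψ s) ^ (α - 1)) MeasureTheory.volume 0 t ∧
      (∫ s in (0:ℝ)..t, Ψ' s * (Ψ t - Ψ s) ^ (α - 1)) = (Ψ t - Ψ 0) ^ α / α := by
    intro t ht0 htb
    have htmem : t ∈ Set.Icc (0:ℝ) b := ⟨ht0.le, htb⟩
    have hsub : Set.Icc (0:ℝ) t ⊆ Set.Icc (0:ℝ) b := Set.Icc_subset_Icc le_rfl htb
    have hΨ0t : Ψ 0 ≤ Ψ t := hmono.monotoneOn h0mem htmem ht0.le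
    have hbase : IntervalIntegrable (fun u => (Ψ t - u) ^ (α - 1))
        MeasureTheory.volume (Ψ 0) (Ψ t) := by
      have h1 : IntervalIntegrable (fun x : ℝ => x ^ (α - 1))
          MeasureTheory.volume 0 (Ψ t - Ψ 0) := intervalIntegrable_rpow' (by linarith)
      have h2 := (h1.comp_sub_left (Ψ t)).symm
      simpa using h2
    have himgsub : Ψ '' Set.Ioo 0 t ⊆ Set.Ioo (Ψ 0) (Ψ t) := by
      rintro _ ⟨s, hs, rfl⟩
      exact ⟨hmono h0mem (hsub (Set.mem_Icc_of_Ioo hs)) hs.1,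
        hmono (hsub (Set.mem_Icc_of_Ioo hs)) htmem hs.2⟩
    have himgsub' : Ψ '' Set.Icc 0 t ⊆ Set.Icc (Ψ 0) (Ψ t) := by
      rintro _ ⟨s, hs, rfl⟩
      exact ⟨hmono.monotoneOn h0mem (hsub hs) hs.1,
        hmono.monotoneOn (hsub hs) htmem hs.2⟩
    have hder : ∀ x ∈ Set.Ioo (0:ℝ) t, HasDerivWithinAt Ψ (Ψ' x) (Set.Ioo 0 t) x :=
      fun x hx => (hderiv x (hsub (Set.mem_Icc_of_Ioo hx))).hasDerivWithinAt
    have hinj : Set.InjOn Ψ (Set.Ioo 0 t) :=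
      hmono.injOn.mono fun x hx => hsub (Set.mem_Icc_of_Ioo hx)
    have hg1 : MeasureTheory.IntegrableOn (fun u => (Ψ t - u) ^ (α - 1))
        (Ψ '' Set.Ioo 0 t) MeasureTheory.volume :=
      ((intervalIntegrable_iff_integrableOn_Icc_of_le hΨ0t).1 hbase).mono_set
        (himgsub.trans Set.Ioo_subset_Icc_self)
    have hgint : MeasureTheory.IntegrableOn (fun s => Ψ' s * (Ψ t - Ψ s) ^ (α - 1))
        (Set.Ioo 0 t) MeasureTheory.volume := by
      have h3 := (MeasureTheory.integrableOn_image_iff_integrableOn_abs_deriv_smul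
        measurableSet_Ioo hder hinj (fun u => (Ψ t - u) ^ (α - 1))).1 hg1
      refine h3.congr_fun ?_ measurableSet_Ioo
      intro x hx
      simp [abs_of_pos (hΨ'pos x (hsub (Set.mem_Icc_of_Ioo hx))), smul_eq_mul]
    have hgI : IntervalIntegrable (fun s => Ψ' s * (Ψ t - Ψ s) ^ (α - 1))
        MeasureTheory.volume 0 t := by
      rw [intervalIntegrable_iff_integrableOn_Ioc_of_le ht0.le,
        integrableOn_Ioc_iff_integrableOn_Ioo]
      exact hgint
    refine ⟨hgI, ?_⟩
    have huIcc : Set.uIcc (0:ℝ) t = Set.Icc 0 t := Set.uIcc_of_le ht0.le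
    have hval : (∫ s in (0:ℝ)..t, Ψ' s • ((fun u => (Ψ t - u) ^ (α - 1)) ∘ Ψ) s)
        = ∫ u in (Ψ 0)..(Ψ t), (Ψ t - u) ^ (α - 1) := by
      apply intervalIntegral.integral_comp_smul_deriv'''
      · rw [huIcc]; exact hΨcont.mono hsub
      · intro x hx
        rw [min_eq_left ht0.le, max_eq_right ht0.le] at hx
        exact (hderiv x (hsub (Set.mem_Icc_of_Ioo hx))).hasDerivWithinAt
      · rw [min_eq_left ht0.le, max_eq_right ht0.le]
        apply ContinuousOn.rpow_const (continuousOn_const.sub continuousOn_id)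
        intro x hx
        obtain ⟨hx1, hx2⟩ := himgsub hx
        left
        exact ne_of_gt (by simp only [Pi.sub_apply, id_eq]; linarith)
      · rw [huIcc]
        exact ((intervalIntegrable_iff_integrableOn_Icc_of_le hΨ0t).1 hbase).mono_set himgsub'
      · rw [huIcc]
        rw [integrableOn_Icc_iff_integrableOn_Ioo]
        simpa [smul_eq_mul, Function.comp] using hgint
    have hval' : (∫ s in (0:ℝ)..t, Ψ' s * (Ψ t - Ψ s) ^ (α - 1))
        = ∫ u in (Ψ 0)..(Ψ t), (Ψ t - u) ^ (α - 1) := by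
      rw [← hval]
      simp [smul_eq_mul, Function.comp]
    rw [hval']
    rw [intervalIntegral.integral_comp_sub_left (fun u : ℝ => u ^ (α - 1)) (Ψ t)]
    simp only [sub_self]
    rw [integral_rpow (Or.inl (by linarith))]
    have hexp : α - 1 + 1 = α := by ring
    rw [hexp, Real.zero_rpow (ne_of_gt hα0)]
    ring
  -- main argument
  intro z z' hzc hz0 hz'c hz'0 M hM hMd t ht
  by_cases htle : t ≤ 0
  · rw [hQ z t, hQ z' t, if_pos htle, if_pos htle]
    simpa using mul_nonneg hRHS0 hM
  push_neg at htle
  have htb : t ≤ b := ht.2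
  have htmem : t ∈ Set.Icc (0:ℝ) b := ⟨htle.le, htb⟩
  have hsub : Set.Icc (0:ℝ) t ⊆ Set.Icc (0:ℝ) b := Set.Icc_subset_Icc le_rfl htb
  obtain ⟨hgI, hgval⟩ := key t htle htb
  have hIocIcc : ∀ s : ℝ, s ∈ Set.Ioo (0:ℝ) t → s ∈ Set.Icc (-r) b := by
    intro s hs
    exact ⟨by linarith [hs.1], le_trans hs.2.le htb⟩
  have hIocIoc : ∀ s : ℝ, s ∈ Set.Ioo (0:ℝ) t → s ∈ Set.Ioc (0:ℝ) b := by
    intro s hs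
    exact ⟨hs.1, le_trans hs.2.le htb⟩
  -- integrability of the integrands
  have hintw : ∀ w : ℝ → ℝ, ContinuousOn w (Set.Icc (-r) b) →
      IntervalIntegrable (fun s => Ψ' s * (Ψ t - Ψ s) ^ (α - 1) * (w s + w (h s)))
        MeasureTheory.volume 0 t := by
    intro w hwc
    obtain ⟨W, hW⟩ := isCompact_Icc.exists_bound_of_continuousOn hwc
    rw [intervalIntegrable_iff_integrableOn_Ioc_of_le htle.le,
      integrableOn_Ioc_iff_integrableOn_Ioo]
    have hgint : MeasureTheory.IntegrableOn
        (fun s => Ψ' s * (Ψ t - Ψ s) ^ (α - 1) * (2 * W)) (Set.Ioo 0 t)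
        MeasureTheory.volume := by
      have := (hgI.mul_const (2 * W))
      rw [intervalIntegrable_iff_integrableOn_Ioc_of_le htle.le,
        integrableOn_Ioc_iff_integrableOn_Ioo] at this
      exact this
    apply MeasureTheory.Integrable.mono' hgint
    · -- a.e. strong measurability
      have hc1 : ContinuousOn (fun s => Ψ' s * (Ψ t - Ψ s) ^ (α - 1) * (w s + w (h s)))
          (Set.Ioo 0 t) := by
        apply ContinuousOn.mul
        · apply ContinuousOn.mul (hΨ'cont.mono (fun x hx => hsub (Set.mem_Icc_of_Ioo hx)))
          apply ContinuousOn.rpow_const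
          · exact continuousOn_const.sub
              ((hΨcont.mono hsub).mono Set.Ioo_subset_Icc_self)
          · intro x hx
            left
            have h1 : Ψ x < Ψ t := hmono (hsub (Set.mem_Icc_of_Ioo hx)) htmem hx.2
            exact ne_of_gt (by linarith)
        · apply ContinuousOn.add
          · exact hwc.mono hIocIcc
          · exact (hwc.comp (hhc.mono hIocIoc) (fun s hs => hmaps s (hIocIoc s hs))).mono
              (fun s hs => hs)
      exact (hc1.aestronglyMeasurable measurableSet_Ioo)
    · apply MeasureTheory.ae_restrict_of_forall_mem measurableSet_Ioo
      intro s hs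
      have hs' : s ∈ Set.Icc (0:ℝ) b := hsub (Set.mem_Icc_of_Ioo hs)
      have h1 : 0 ≤ Ψ' s := (hΨ'pos s hs').le
      have h2 : 0 ≤ (Ψ t - Ψ s) ^ (α - 1) := Real.rpow_nonneg
        (by linarith [hmono.monotoneOn hs' htmem hs.2.le]) _
      have h3 : |w s + w (h s)| ≤ 2 * W := by
        calc |w s + w (h s)| ≤ |w s| + |w (h s)| := abs_add_le _ _
          _ ≤ W + W := add_le_add (hW s (hIocIcc s hs)) (hW (h s) (hmaps s (hIocIoc s hs)))
          _ = 2 * W := by ring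
      calc ‖Ψ' s * (Ψ t - Ψ s) ^ (α - 1) * (w s + w (h s))‖
          = Ψ' s * (Ψ t - Ψ s) ^ (α - 1) * |w s + w (h s)| := by
            rw [Real.norm_eq_abs, abs_mul, abs_of_nonneg (mul_nonneg h1 h2)]
        _ ≤ Ψ' s * (Ψ t - Ψ s) ^ (α - 1) * (2 * W) := by
            exact mul_le_mul_of_nonneg_left h3 (mul_nonneg h1 h2)
  have hIz := hintw z hzc
  have hIz' := hintw z' hz'c
  have hD := hIz.sub hIz'
  -- bound the integral difference
  have hDbound : |(∫ s in (0:ℝ)..t, Ψ' s * (Ψ t - Ψ s) ^ (α - 1) * (z s + z (h s)))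
      - ∫ s in (0:ℝ)..t, Ψ' s * (Ψ t - Ψ s) ^ (α - 1) * (z' s + z' (h s))|
      ≤ 2 * M * ((Ψ t - Ψ 0) ^ α / α) := by
    rw [← intervalIntegral.integral_sub hIz hIz']
    calc |∫ s in (0:ℝ)..t, (Ψ' s * (Ψ t - Ψ s) ^ (α - 1) * (z s + z (h s))
            - Ψ' s * (Ψ t - Ψ s) ^ (α - 1) * (z' s + z' (h s)))|
        ≤ ∫ s in (0:ℝ)..t, |Ψ' s * (Ψ t - Ψ s) ^ (α - 1) * (z s + z (h s))
            - Ψ' s * (Ψ t - Ψ s) ^ (α - 1) * (z' s + z' (h s))| :=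
          intervalIntegral.abs_integral_le_integral_abs htle.le
      _ ≤ ∫ s in (0:ℝ)..t, (2 * M) * (Ψ' s * (Ψ t - Ψ s) ^ (α - 1)) := by
          apply intervalIntegral.integral_mono_ae_restrict htle.le hD.abs
            (hgI.const_mul (2 * M))
          rw [← MeasureTheory.restrict_Ioo_eq_restrict_Icc]
          apply MeasureTheory.ae_restrict_of_forall_mem measurableSet_Ioo
          intro s hs
          have hs' : s ∈ Set.Icc (0:ℝ) b := hsub (Set.mem_Icc_of_Ioo hs)
          have h1 : 0 ≤ Ψ' s := (hΨ'pos s hs').le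
          have h2 : 0 ≤ (Ψ t - Ψ s) ^ (α - 1) := Real.rpow_nonneg
            (by linarith [hmono.monotoneOn hs' htmem hs.2.le]) _
          have h3 : |(z s + z (h s)) - (z' s + z' (h s))| ≤ 2 * M := by
            calc |(z s + z (h s)) - (z' s + z' (h s))|
                = |(z s - z' s) + (z (h s) - z' (h s))| := by ring_nf
              _ ≤ |z s - z' s| + |z (h s) - z' (h s)| := abs_add_le _ _
              _ ≤ M + M := add_le_add (hMd s (hIocIcc s hs))
                  (hMd (h s) (hmaps s (hIocIoc s hs)))
              _ = 2 * M := by ring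
          have heq : Ψ' s * (Ψ t - Ψ s) ^ (α - 1) * (z s + z (h s))
              - Ψ' s * (Ψ t - Ψ s) ^ (α - 1) * (z' s + z' (h s))
              = Ψ' s * (Ψ t - Ψ s) ^ (α - 1) * ((z s + z (h s)) - (z' s + z' (h s))) := by
            ring
          simp only [Pi.abs_apply]
          rw [heq, abs_mul, abs_of_nonneg (mul_nonneg h1 h2)]
          calc Ψ' s * (Ψ t - Ψ s) ^ (α - 1) * |(z s + z (h s)) - (z' s + z' (h s))|
              ≤ Ψ' s * (Ψ t - Ψ s) ^ (α - 1) * (2 * M) :=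
                mul_le_mul_of_nonneg_left h3 (mul_nonneg h1 h2)
            _ = 2 * M * (Ψ' s * (Ψ t - Ψ s) ^ (α - 1)) := by ring
      _ = 2 * M * ((Ψ t - Ψ 0) ^ α / α) := by
          rw [intervalIntegral.integral_const_mul, hgval]
  -- sum difference
  have hsumbound : |(∑ k ∈ Finset.Icc 1 p, if tk k < t then LJ k * z (tk k) else 0)
      - ∑ k ∈ Finset.Icc 1 p, if tk k < t then LJ k * z' (tk k) else 0|
      ≤ (∑ k ∈ Finset.Icc 1 p, LJ k) * M := by
    rw [← Finset.sum_sub_distrib]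
    calc |∑ k ∈ Finset.Icc 1 p, ((if tk k < t then LJ k * z (tk k) else 0)
            - if tk k < t then LJ k * z' (tk k) else 0)|
        ≤ ∑ k ∈ Finset.Icc 1 p, |(if tk k < t then LJ k * z (tk k) else 0)
            - if tk k < t then LJ k * z' (tk k) else 0| := Finset.abs_sum_le_sum_abs _ _
      _ ≤ ∑ k ∈ Finset.Icc 1 p, LJ k * M := by
          apply Finset.sum_le_sum
          intro k hk
          by_cases hcase : tk k < t
          · rw [if_pos hcase, if_pos hcase, ← mul_sub, abs_mul,
              abs_of_pos (hLJ k hk)]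
            exact mul_le_mul_of_nonneg_left (hMd (tk k) (htkmem k hk)) (hLJ k hk).le
          · rw [if_neg hcase, if_neg hcase, sub_zero, abs_zero]
            exact mul_nonneg (hLJ k hk).le hM
      _ = (∑ k ∈ Finset.Icc 1 p, LJ k) * M := by rw [Finset.sum_mul]
  -- put everything together
  rw [hQ z t, hQ z' t, if_neg (not_le.2 htle), if_neg (not_le.2 htle)]
  have hsplit : (A + (1 / Real.Gamma ρ) *
        (∑ k ∈ Finset.Icc 1 p, if tk k < t then LJ k * z (tk k) else 0)
      + C * ∫ s in (0:ℝ)..t, Ψ' s * (Ψ t - Ψ s) ^ (α - 1) * (z s + z (h s)))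
      - (A + (1 / Real.Gamma ρ) *
        (∑ k ∈ Finset.Icc 1 p, if tk k < t then LJ k * z' (tk k) else 0)
      + C * ∫ s in (0:ℝ)..t, Ψ' s * (Ψ t - Ψ s) ^ (α - 1) * (z' s + z' (h s)))
      = (1 / Real.Gamma ρ) *
          ((∑ k ∈ Finset.Icc 1 p, if tk k < t then LJ k * z (tk k) else 0)
            - ∑ k ∈ Finset.Icc 1 p, if tk k < t then LJ k * z' (tk k) else 0)
        + C * ((∫ s in (0:ℝ)..t, Ψ' s * (Ψ t - Ψ s) ^ (α - 1) * (z s + z (h s)))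
            - ∫ s in (0:ℝ)..t, Ψ' s * (Ψ t - Ψ s) ^ (α - 1) * (z' s + z' (h s))) := by
    ring
  rw [hsplit]
  have hΨtb : (Ψ t - Ψ 0) ^ α ≤ (Ψ b - Ψ 0) ^ α := by
    apply Real.rpow_le_rpow
    · linarith [hmono.monotoneOn h0mem htmem htle.le]
    · linarith [hmono.monotoneOn htmem hbmem htb]
    · exact hα0.le
  calc |(1 / Real.Gamma ρ) *
          ((∑ k ∈ Finset.Icc 1 p, if tk k < t then LJ k * z (tk k) else 0)
            - ∑ k ∈ Finset.Icc 1 p, if tk k < t then LJ k * z' (tk k) else 0)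
        + C * ((∫ s in (0:ℝ)..t, Ψ' s * (Ψ t - Ψ s) ^ (α - 1) * (z s + z (h s)))
            - ∫ s in (0:ℝ)..t, Ψ' s * (Ψ t - Ψ s) ^ (α - 1) * (z' s + z' (h s)))|
      ≤ |(1 / Real.Gamma ρ) *
          ((∑ k ∈ Finset.Icc 1 p, if tk k < t then LJ k * z (tk k) else 0)
            - ∑ k ∈ Finset.Icc 1 p, if tk k < t then LJ k * z' (tk k) else 0)|
        + |C * ((∫ s in (0:ℝ)..t, Ψ' s * (Ψ t - Ψ s) ^ (α - 1) * (z s + z (h s)))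
            - ∫ s in (0:ℝ)..t, Ψ' s * (Ψ t - Ψ s) ^ (α - 1) * (z' s + z' (h s)))| :=
        abs_add_le _ _
    _ ≤ (1 / Real.Gamma ρ) * ((∑ k ∈ Finset.Icc 1 p, LJ k) * M)
        + C * (2 * M * ((Ψ t - Ψ 0) ^ α / α)) := by
        apply add_le_add
        · rw [abs_mul, abs_of_pos (by positivity : (0:ℝ) < 1 / Real.Gamma ρ)]
          exact mul_le_mul_of_nonneg_left hsumbound (by positivity)
        · rw [abs_mul, abs_of_nonneg hC0]
          exact mul_le_mul_of_nonneg_left hDbound hC0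
    _ ≤ (1 / Real.Gamma ρ) * ((∑ k ∈ Finset.Icc 1 p, LJ k) * M)
        + C * (2 * M * ((Ψ b - Ψ 0) ^ α / α)) := by
        apply add_le_add_right
        apply mul_le_mul_of_nonneg_left _ hC0
        apply mul_le_mul_of_nonneg_left _ (by positivity)
        exact div_le_div_of_nonneg_right hΨtb hα0.le
    _ = ((∑ k ∈ Finset.Icc 1 p, LJ k) / Real.Gamma ρ
          + 2 * K * (Ψ b - Ψ 0) ^ (1 - ρ + α) / ((1 - Lf) * Real.Gamma (α + 1))) * M := by
        rw [hCdef, Real.Gamma_add_one (ne_of_gt hα0),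
          show (1 : ℝ) - ρ + α = (1 - ρ) + α by ring,
          Real.rpow_add (by linarith : (0:ℝ) < Ψ b - Ψ 0)]
        field_simp
end

section
/- Semigroup property of Ψ-fractional integrals: for α, γ > 0 and f continuous on [0,b], I^{γ;Ψ}(I^{α;Ψ} f)(t) = I^{γ+α;Ψ} f(t) for all t ∈ [0,b]. -/
/-!
The substitution `u = Ψ s` turns `I^{α;Ψ} f (t)` into the Riemann–Liouville integral of
`f ∘ Ψ⁻¹` with lower limit `Ψ 0`, evaluated at `Ψ t`. For Riemann–Liouville integrals the
semigroup law is Dirichlet's formula: Fubini on the triangle `a < v < u < x` and the affine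
substitution `u = v + (x - v) w` give
`∫_v^x (x - u)^(γ-1) (u - v)^(α-1) du = B(α, γ) (x - v)^(α+γ-1)`,
and `B(α, γ) = Γ(α) Γ(γ) / Γ(α + γ)`.
-/

open Set MeasureTheory Topology

theorem HasDerivAt.nonneg_of_monotoneOn_of_mem_nhds {φ : ℝ → ℝ} {φ' x : ℝ} {s : Set ℝ}
    (hφ : HasDerivAt φ φ' x) (hmono : MonotoneOn φ s) (hs : s ∈ 𝓝 x) : 0 ≤ φ' :=
  hφ.hasDerivWithinAt.nonneg_of_monotoneOn
    (accPt_iff_frequently_nhdsNE.2 (eventually_nhdsWithin_of_eventually_nhds hs).frequently) hmono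

section Substitution

variable {E : Type*} [NormedAddCommGroup E] [NormedSpace ℝ E] {φ φ' : ℝ → ℝ} {p q : ℝ}

theorem integral_Ioo_deriv_smul_comp (hpq : p ≤ q) (hφ : ContinuousOn φ (Icc p q))
    (hφ' : ∀ x ∈ Ioo p q, HasDerivAt φ (φ' x) x) (hmono : StrictMonoOn φ (Icc p q))
    (G : ℝ → E) : ∫ x in Ioo p q, φ' x • G (φ x) = ∫ u in Ioo (φ p) (φ q), G u := by
  rw [← hφ.image_Ioo_of_strictMonoOn hpq hmono, integral_image_eq_integral_abs_deriv_smul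
    measurableSet_Ioo (fun x hx => (hφ' x hx).hasDerivWithinAt)
    (hmono.injOn.mono Ioo_subset_Icc_self)]
  refine setIntegral_congr_fun measurableSet_Ioo fun x hx => ?_
  rw [abs_of_nonneg ((hφ' x hx).nonneg_of_monotoneOn_of_mem_nhds
    (hmono.monotoneOn.mono Ioo_subset_Icc_self) (isOpen_Ioo.mem_nhds hx))]

theorem integrableOn_Ioo_iff_deriv_smul_comp (hpq : p ≤ q) (hφ : ContinuousOn φ (Icc p q))
    (hφ' : ∀ x ∈ Ioo p q, HasDerivAt φ (φ' x) x) (hmono : StrictMonoOn φ (Icc p q))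
    (G : ℝ → E) :
    IntegrableOn G (Ioo (φ p) (φ q)) ↔ IntegrableOn (fun x => φ' x • G (φ x)) (Ioo p q) := by
  rw [← hφ.image_Ioo_of_strictMonoOn hpq hmono,
    integrableOn_image_iff_integrableOn_abs_deriv_smul measurableSet_Ioo
      (fun x hx => (hφ' x hx).hasDerivWithinAt) (hmono.injOn.mono Ioo_subset_Icc_self)]
  refine integrableOn_congr_fun (fun x hx => ?_) measurableSet_Ioo
  rw [abs_of_nonneg ((hφ' x hx).nonneg_of_monotoneOn_of_mem_nhds
    (hmono.monotoneOn.mono Ioo_subset_Icc_self) (isOpen_Ioo.mem_nhds hx))]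

variable {v x : ℝ}

theorem integral_Ioo_affine (hvx : v < x) (G : ℝ → E) :
    ∫ w in Ioo 0 1, (x - v) • G (v + (x - v) * w) = ∫ u in Ioo v x, G u := by
  simpa using integral_Ioo_deriv_smul_comp zero_le_one (by fun_prop)
    (fun w _ => ((hasDerivAt_id w).const_mul (x - v)).const_add v)
    (((strictMono_mul_left_of_pos (sub_pos.2 hvx)).const_add v).strictMonoOn _) G

theorem integrableOn_Ioo_iff_affine (hvx : v < x) (G : ℝ → E) :
    IntegrableOn G (Ioo v x) ↔ IntegrableOn (fun w => (x - v) • G (v + (x - v) * w)) (Ioo 0 1) := by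
  simpa using integrableOn_Ioo_iff_deriv_smul_comp zero_le_one (by fun_prop)
    (fun w _ => ((hasDerivAt_id w).const_mul (x - v)).const_add v)
    (((strictMono_mul_left_of_pos (sub_pos.2 hvx)).const_add v).strictMonoOn _) G

end Substitution

section Beta

variable {α γ : ℝ}

theorem ofReal_rpow_mul_one_sub_rpow {w : ℝ} (hw : w ∈ Icc 0 1) :
    ((w ^ (α - 1) * (1 - w) ^ (γ - 1) : ℝ) : ℂ) =
      (w : ℂ) ^ (α - 1 : ℂ) * (1 - w : ℂ) ^ (γ - 1 : ℂ) := by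
  rw [Complex.ofReal_mul, Complex.ofReal_cpow hw.1, Complex.ofReal_cpow (sub_nonneg.2 hw.2)]
  push_cast
  rfl

theorem integrableOn_rpow_mul_one_sub_rpow (hα : 0 < α) (hγ : 0 < γ) :
    IntegrableOn (fun w : ℝ => w ^ (α - 1) * (1 - w) ^ (γ - 1)) (Ioo 0 1) := by
  have h := Complex.betaIntegral_convergent (u := α) (v := γ) (by simpa) (by simpa)
  rw [intervalIntegrable_iff_integrableOn_Ioo_of_le zero_le_one] at h
  refine IntegrableOn.congr_fun h.re (fun w hw => ?_) measurableSet_Ioo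
  simp [← ofReal_rpow_mul_one_sub_rpow (Ioo_subset_Icc_self hw)]

theorem integral_rpow_mul_one_sub_rpow (hα : 0 < α) (hγ : 0 < γ) :
    ∫ w in Ioo 0 1, w ^ (α - 1) * (1 - w) ^ (γ - 1) = ProbabilityTheory.beta α γ := by
  have h := Complex.betaIntegral_convergent (u := α) (v := γ) (by simpa) (by simpa)
  rw [intervalIntegrable_iff_integrableOn_Ioo_of_le zero_le_one] at h
  rw [ProbabilityTheory.beta_eq_betaIntegralReal α γ hα hγ, Complex.betaIntegral,
    intervalIntegral.integral_of_le zero_le_one, integral_Ioc_eq_integral_Ioo,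
    ← RCLike.re_to_complex, ← integral_re h]
  refine setIntegral_congr_fun measurableSet_Ioo fun w hw => ?_
  simp [← ofReal_rpow_mul_one_sub_rpow (Ioo_subset_Icc_self hw)]

variable {v x : ℝ}

theorem smul_rpow_mul_rpow_affine (hvx : v < x) {w : ℝ} (hw : w ∈ Ioo 0 1) :
    (x - v) • ((x - (v + (x - v) * w)) ^ (γ - 1) * (v + (x - v) * w - v) ^ (α - 1)) =
      (x - v) ^ (α + γ - 1) * (w ^ (α - 1) * (1 - w) ^ (γ - 1)) := by
  have hc : 0 < x - v := sub_pos.2 hvx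
  rw [smul_eq_mul, show x - (v + (x - v) * w) = (x - v) * (1 - w) by ring,
    show v + (x - v) * w - v = (x - v) * w by ring, Real.mul_rpow hc.le (sub_pos.2 hw.2).le,
    Real.mul_rpow hc.le hw.1.le, show α + γ - 1 = 1 + (γ - 1) + (α - 1) by ring,
    Real.rpow_add hc, Real.rpow_add hc, Real.rpow_one]
  ring

theorem integrableOn_Ioo_rpow_mul_rpow (hα : 0 < α) (hγ : 0 < γ) (hvx : v < x) :
    IntegrableOn (fun u => (x - u) ^ (γ - 1) * (u - v) ^ (α - 1)) (Ioo v x) := by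
  rw [integrableOn_Ioo_iff_affine hvx]
  exact IntegrableOn.congr_fun ((integrableOn_rpow_mul_one_sub_rpow hα hγ).const_mul _)
    (fun w hw => (smul_rpow_mul_rpow_affine hvx hw).symm) measurableSet_Ioo

theorem integral_Ioo_rpow_mul_rpow (hα : 0 < α) (hγ : 0 < γ) (hvx : v < x) :
    ∫ u in Ioo v x, (x - u) ^ (γ - 1) * (u - v) ^ (α - 1) =
      ProbabilityTheory.beta α γ * (x - v) ^ (α + γ - 1) := by
  rw [← integral_Ioo_affine hvx,
    setIntegral_congr_fun measurableSet_Ioo fun w hw => smul_rpow_mul_rpow_affine hvx hw,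
    integral_const_mul, integral_rpow_mul_one_sub_rpow hα hγ, mul_comm]

end Beta

theorem integrableOn_Ioo_sub_rpow {r a x : ℝ} (hr : -1 < r) :
    IntegrableOn (fun v => (x - v) ^ r) (Ioo a x) := by
  rcases le_total a x with hax | hxa
  · rw [← intervalIntegrable_iff_integrableOn_Ioo_of_le hax]
    simpa using
      (intervalIntegral.intervalIntegrable_rpow' hr (a := x - a) (b := x - x)).comp_sub_left x
  · simp [Ioo_eq_empty_of_le hxa]

noncomputable def triangleKernel (α γ x u v : ℝ) : ℝ :=
  (Ioi v).indicator (fun u => (x - u) ^ (γ - 1) * (u - v) ^ (α - 1)) u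

section TriangleKernel

variable {α γ a x : ℝ}

theorem Ioo_inter_Ioi_of_le {v : ℝ} (hav : a ≤ v) : Ioo a x ∩ Ioi v = Ioo v x := by
  rw [Ioo_inter_Ioi, max_eq_right hav]

theorem integrableOn_triangleKernel (hα : 0 < α) (hγ : 0 < γ) {v : ℝ} (hv : v ∈ Ioo a x) :
    IntegrableOn (fun u => triangleKernel α γ x u v) (Ioo a x) := by
  simp only [triangleKernel]
  rw [IntegrableOn, integrable_indicator_iff measurableSet_Ioi, IntegrableOn,
    Measure.restrict_restrict measurableSet_Ioi, inter_comm, Ioo_inter_Ioi_of_le hv.1.le]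
  exact integrableOn_Ioo_rpow_mul_rpow hα hγ hv.2

theorem integral_triangleKernel (hα : 0 < α) (hγ : 0 < γ) {v : ℝ} (hv : v ∈ Ioo a x) :
    ∫ u in Ioo a x, triangleKernel α γ x u v =
      ProbabilityTheory.beta α γ * (x - v) ^ (α + γ - 1) := by
  simp only [triangleKernel]
  rw [setIntegral_indicator measurableSet_Ioi, Ioo_inter_Ioi_of_le hv.1.le,
    integral_Ioo_rpow_mul_rpow hα hγ hv.2]

theorem triangleKernel_nonneg {u : ℝ} (hux : u < x) (v : ℝ) : 0 ≤ triangleKernel α γ x u v := by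
  rw [triangleKernel, indicator_apply]
  split_ifs with hvu
  · exact mul_nonneg (Real.rpow_nonneg (sub_pos.2 hux).le _)
      (Real.rpow_nonneg (sub_pos.2 (mem_Ioi.1 hvu)).le _)
  · exact le_rfl

theorem measurable_triangleKernel : Measurable (Function.uncurry (triangleKernel α γ x)) :=
  Measurable.indicator (by fun_prop) (measurableSet_lt measurable_snd measurable_fst)

theorem integrable_triangleKernel_mul (hα : 0 < α) (hγ : 0 < γ) {g : ℝ → ℝ} {C : ℝ}
    (hg : AEStronglyMeasurable g (volume.restrict (Ioo a x))) (hgC : ∀ v ∈ Ioo a x, ‖g v‖ ≤ C) :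
    Integrable (Function.uncurry fun u v => triangleKernel α γ x u v * g v)
      ((volume.restrict (Ioo a x)).prod (volume.restrict (Ioo a x))) := by
  refine (integrable_prod_iff' (measurable_triangleKernel.aestronglyMeasurable.mul
    (hg.comp_quasiMeasurePreserving Measure.quasiMeasurePreserving_snd))).2 ⟨?_, ?_⟩
  · exact ae_restrict_of_forall_mem measurableSet_Ioo fun v hv =>
      (integrableOn_triangleKernel hα hγ hv).mul_const (g v)
  · refine Integrable.congr
      (f := fun v => ProbabilityTheory.beta α γ * (x - v) ^ (α + γ - 1) * ‖g v‖) ?_ ?_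
    · exact ((integrableOn_Ioo_sub_rpow (by linarith)).const_mul _).mul_bdd hg.norm
        (ae_restrict_of_forall_mem measurableSet_Ioo fun v hv => by simpa using hgC v hv)
    · refine ae_restrict_of_forall_mem measurableSet_Ioo fun v hv => ?_
      change _ * ‖g v‖ = ∫ u in Ioo a x, ‖triangleKernel α γ x u v * g v‖
      rw [← integral_triangleKernel hα hγ hv, ← integral_mul_const]
      refine setIntegral_congr_fun measurableSet_Ioo fun u hu => ?_
      rw [norm_mul, Real.norm_of_nonneg (triangleKernel_nonneg hu.2 v)]

theorem integral_Ioo_rpow_mul_integral_Ioo (hα : 0 < α) (hγ : 0 < γ) {g : ℝ → ℝ} {C : ℝ}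
    (hg : AEStronglyMeasurable g (volume.restrict (Ioo a x))) (hgC : ∀ v ∈ Ioo a x, ‖g v‖ ≤ C) :
    ∫ u in Ioo a x, (x - u) ^ (γ - 1) * ∫ v in Ioo a u, (u - v) ^ (α - 1) * g v =
      ProbabilityTheory.beta α γ * ∫ v in Ioo a x, (x - v) ^ (α + γ - 1) * g v := by
  have hsection_u : ∀ u ∈ Ioo a x, ∫ v in Ioo a x, triangleKernel α γ x u v * g v =
      (x - u) ^ (γ - 1) * ∫ v in Ioo a u, (u - v) ^ (α - 1) * g v := fun u hu => by
    have hK : ∀ v, triangleKernel α γ x u v * g v =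
        (x - u) ^ (γ - 1) * (Iio u).indicator (fun v => (u - v) ^ (α - 1) * g v) v := fun v => by
      simp only [triangleKernel, indicator_apply, mem_Ioi, mem_Iio]
      split_ifs <;> ring
    simp_rw [hK]
    rw [integral_const_mul, setIntegral_indicator measurableSet_Iio, Ioo_inter_Iio,
      min_eq_right hu.2.le]
  have hsection_v : ∀ v ∈ Ioo a x, ∫ u in Ioo a x, triangleKernel α γ x u v * g v =
      ProbabilityTheory.beta α γ * ((x - v) ^ (α + γ - 1) * g v) := fun v hv => by
    rw [integral_mul_const, integral_triangleKernel hα hγ hv, mul_assoc]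
  calc ∫ u in Ioo a x, (x - u) ^ (γ - 1) * ∫ v in Ioo a u, (u - v) ^ (α - 1) * g v
      = ∫ u in Ioo a x, ∫ v in Ioo a x, triangleKernel α γ x u v * g v :=
        (setIntegral_congr_fun measurableSet_Ioo hsection_u).symm
    _ = ∫ v in Ioo a x, ∫ u in Ioo a x, triangleKernel α γ x u v * g v :=
        integral_integral_swap (integrable_triangleKernel_mul hα hγ hg hgC)
    _ = _ := by rw [setIntegral_congr_fun measurableSet_Ioo hsection_v, integral_const_mul]

end TriangleKernel

/-- The Riemann–Liouville fractional integral with lower limit `a`. -/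
noncomputable def rlIntegral (α a : ℝ) (g : ℝ → ℝ) (x : ℝ) : ℝ :=
  1 / Real.Gamma α * ∫ v in Ioo a x, (x - v) ^ (α - 1) * g v

theorem rlIntegral_rlIntegral {α γ a x C : ℝ} {g : ℝ → ℝ} (hα : 0 < α) (hγ : 0 < γ)
    (hg : AEStronglyMeasurable g (volume.restrict (Ioo a x))) (hgC : ∀ v ∈ Ioo a x, ‖g v‖ ≤ C) :
    rlIntegral γ a (rlIntegral α a g) x = rlIntegral (γ + α) a g x := by
  have hpull : ∫ u in Ioo a x, (x - u) ^ (γ - 1) * rlIntegral α a g u =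
      1 / Real.Gamma α * ∫ u in Ioo a x, (x - u) ^ (γ - 1) *
        ∫ v in Ioo a u, (u - v) ^ (α - 1) * g v := by
    rw [← integral_const_mul]
    exact integral_congr_ae (ae_of_all _ fun u => by simp only [rlIntegral]; ring)
  rw [rlIntegral, hpull, integral_Ioo_rpow_mul_integral_Ioo hα hγ hg hgC, rlIntegral,
    ProbabilityTheory.beta, add_comm γ α]
  have := Real.Gamma_pos_of_pos hα
  have := Real.Gamma_pos_of_pos hγ
  have := Real.Gamma_pos_of_pos (add_pos hα hγ)
  field_simp

noncomputable def psiFracIntegral (Ψ Ψ' : ℝ → ℝ) (α : ℝ) (f : ℝ → ℝ) (t : ℝ) : ℝ :=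
  1 / Real.Gamma α * ∫ s in (0 : ℝ)..t, Ψ' s * (Ψ t - Ψ s) ^ (α - 1) * f s

section PsiFractional

variable {Ψ Ψ' f g : ℝ → ℝ} {b t : ℝ}

theorem psiFracIntegral_eq_rlIntegral {α : ℝ} (hderiv : ∀ x ∈ Icc 0 b, HasDerivAt Ψ (Ψ' x) x)
    (hmono : StrictMonoOn Ψ (Icc 0 b)) (hfg : ∀ s ∈ Icc 0 b, f s = g (Ψ s)) (ht : t ∈ Icc 0 b) :
    psiFracIntegral Ψ Ψ' α f t = rlIntegral α (Ψ 0) g (Ψ t) := by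
  have hsub : Icc 0 t ⊆ Icc 0 b := Icc_subset_Icc_right ht.2
  rw [psiFracIntegral, rlIntegral, intervalIntegral.integral_of_le ht.1,
    integral_Ioc_eq_integral_Ioo, ← integral_Ioo_deriv_smul_comp ht.1
      (fun x hx => (hderiv x (hsub hx)).continuousAt.continuousWithinAt)
      (fun x hx => hderiv x (hsub (Ioo_subset_Icc_self hx))) (hmono.mono hsub)]
  congr 1
  refine setIntegral_congr_fun measurableSet_Ioo fun s hs => ?_
  rw [hfg s (hsub (Ioo_subset_Icc_self hs)), smul_eq_mul, mul_assoc]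

theorem integrableOn_Ioo_of_eq_comp (hderiv : ∀ x ∈ Icc 0 b, HasDerivAt Ψ (Ψ' x) x)
    (hΨ'cont : ContinuousOn Ψ' (Icc 0 b)) (hmono : StrictMonoOn Ψ (Icc 0 b))
    (hf : ContinuousOn f (Icc 0 b)) (hfg : ∀ s ∈ Icc 0 b, f s = g (Ψ s)) (ht : t ∈ Icc 0 b) :
    IntegrableOn g (Ioo (Ψ 0) (Ψ t)) := by
  have hsub : Icc 0 t ⊆ Icc 0 b := Icc_subset_Icc_right ht.2
  rw [integrableOn_Ioo_iff_deriv_smul_comp ht.1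
    (fun x hx => (hderiv x (hsub hx)).continuousAt.continuousWithinAt)
    (fun x hx => hderiv x (hsub (Ioo_subset_Icc_self hx))) (hmono.mono hsub)]
  refine IntegrableOn.congr_fun (f := fun s => Ψ' s * f s) ?_ (fun s hs => by
    rw [smul_eq_mul, ← hfg s (hsub (Ioo_subset_Icc_self hs))]) measurableSet_Ioo
  exact ((hΨ'cont.mul hf).mono hsub).integrableOn_Icc.mono_set Ioo_subset_Icc_self

theorem norm_le_of_eq_comp {C : ℝ} (hderiv : ∀ x ∈ Icc 0 b, HasDerivAt Ψ (Ψ' x) x)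
    (hmono : StrictMonoOn Ψ (Icc 0 b)) (hfg : ∀ s ∈ Icc 0 b, f s = g (Ψ s))
    (hC : ∀ s ∈ Icc 0 b, ‖f s‖ ≤ C) (ht : t ∈ Icc 0 b) :
    ∀ u ∈ Ioo (Ψ 0) (Ψ t), ‖g u‖ ≤ C := by
  have hsub : Icc 0 t ⊆ Icc 0 b := Icc_subset_Icc_right ht.2
  rw [← ContinuousOn.image_Ioo_of_strictMonoOn ht.1
    (fun x hx => (hderiv x (hsub hx)).continuousAt.continuousWithinAt) (hmono.mono hsub)]
  rintro _ ⟨s, hs, rfl⟩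
  have hs' : s ∈ Icc 0 b := hsub (Ioo_subset_Icc_self hs)
  exact hfg s hs' ▸ hC s hs'

end PsiFractional

theorem psi_fracInt_semigroup_general
    (b α γ : ℝ) (hα : 0 < α) (hγ : 0 < γ)
    (Ψ Ψ' : ℝ → ℝ)
    (hderiv : ∀ x ∈ Set.Icc (0:ℝ) b, HasDerivAt Ψ (Ψ' x) x)
    (hΨ'cont : ContinuousOn Ψ' (Set.Icc (0:ℝ) b))
    (hmono : StrictMonoOn Ψ (Set.Icc (0:ℝ) b))
    (f : ℝ → ℝ) (hf : ContinuousOn f (Set.Icc (0:ℝ) b)) :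
    ∀ t ∈ Set.Icc (0:ℝ) b,
      (1 / Real.Gamma γ) *
          ∫ s in (0:ℝ)..t, Ψ' s * (Ψ t - Ψ s) ^ (γ - 1) *
            ((1 / Real.Gamma α) *
              ∫ τ in (0:ℝ)..s, Ψ' τ * (Ψ s - Ψ τ) ^ (α - 1) * f τ)
        = (1 / Real.Gamma (γ + α)) *
            ∫ s in (0:ℝ)..t, Ψ' s * (Ψ t - Ψ s) ^ (γ + α - 1) * f s := by
  intro t ht
  set g := f ∘ Function.invFunOn Ψ (Icc 0 b)
  have hfg : ∀ s ∈ Icc 0 b, f s = g (Ψ s) := fun s hs => by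
    simp only [g, Function.comp_apply, hmono.injOn.leftInvOn_invFunOn hs]
  have hinner : ∀ s ∈ Icc 0 b,
      psiFracIntegral Ψ Ψ' α f s = rlIntegral α (Ψ 0) g (Ψ s) := fun s hs =>
    psiFracIntegral_eq_rlIntegral hderiv hmono hfg hs
  obtain ⟨C, hC⟩ := isCompact_Icc.exists_bound_of_continuousOn hf
  change psiFracIntegral Ψ Ψ' γ (psiFracIntegral Ψ Ψ' α f) t = psiFracIntegral Ψ Ψ' (γ + α) f t
  rw [psiFracIntegral_eq_rlIntegral hderiv hmono hinner ht,
    psiFracIntegral_eq_rlIntegral hderiv hmono hfg ht]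
  exact rlIntegral_rlIntegral hα hγ
    (integrableOn_Ioo_of_eq_comp hderiv hΨ'cont hmono hf hfg ht).aestronglyMeasurable
    (norm_le_of_eq_comp hderiv hmono hfg hC ht)

/-- semigroup property of Ψ-fractional integrals,
`I^{γ;Ψ}(I^{α;Ψ}f) = I^{γ+α;Ψ}f`. -/
theorem psi_fracInt_semigroup
    (b α γ : ℝ) (hb : 0 < b) (hα : 0 < α) (hγ : 0 < γ)
    (Ψ Ψ' : ℝ → ℝ)
    (hderiv : ∀ x ∈ Set.Icc (0:ℝ) b, HasDerivAt Ψ (Ψ' x) x)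
    (hΨ'cont : ContinuousOn Ψ' (Set.Icc (0:ℝ) b))
    (hmono : StrictMonoOn Ψ (Set.Icc (0:ℝ) b))
    (hΨ'ne : ∀ x ∈ Set.Icc (0:ℝ) b, Ψ' x ≠ 0)
    (f : ℝ → ℝ) (hf : ContinuousOn f (Set.Icc (0:ℝ) b)) :
    ∀ t ∈ Set.Icc (0:ℝ) b,
      (1 / Real.Gamma γ) *
          ∫ s in (0:ℝ)..t, Ψ' s * (Ψ t - Ψ s) ^ (γ - 1) *
            ((1 / Real.Gamma α) *
              ∫ τ in (0:ℝ)..s, Ψ' τ * (Ψ s - Ψ τ) ^ (α - 1) * f τ)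
        = (1 / Real.Gamma (γ + α)) *
            ∫ s in (0:ℝ)..t, Ψ' s * (Ψ t - Ψ s) ^ (γ + α - 1) * f s :=
  psi_fracInt_semigroup_general b α γ hα hγ Ψ Ψ' hderiv hΨ'cont hmono f hf
end
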